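/- Let (W_k)_{k≥0} be a sequence of row-stochastic real n×n matrices and let Γ(k) = W_k·W_{k−1}···W_0. Suppose there exist μ ∈ (0,1], a positive integer N, and integers 0 = m_0 < m_1 < m_2 < ⋯ with m_{h+1} − m_h ≤ N for all h, such that for every h the block product W_{m_{h+1}−1}···W_{m_h} has some column q_h with all entries at least μ. Then there exists a probability vector ρ ∈ ℝ^n (ρ_j ≥ 0 for all j and Σ_{j=1}^n ρ_j = 1) such that for every i and j, lim_{k→∞} Γ(k)_{ij} = ρ_j. -/
import Mathlib


/-- A real matrix is row-stochastic if all its entries are nonnegative and each of its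
rows sums to 1. -/
def RowStochastic {n : ℕ} (A : Matrix (Fin n) (Fin n) ℝ) : Prop :=
  (∀ i j, 0 ≤ A i j) ∧ ∀ i, ∑ j, A i j = 1

/-- `leftProd W s t = W (s+t-1) * ⋯ * W (s+1) * W s` (the product of `t` consecutive
factors starting at index `s`, with later factors multiplied on the left). -/
noncomputable def leftProd {n : ℕ} (W : ℕ → Matrix (Fin n) (Fin n) ℝ) (s : ℕ) :
    ℕ → Matrix (Fin n) (Fin n) ℝ
  | 0 => 1
  | t + 1 => W (s + t) * leftProd W s t

lemma rs_one {n : ℕ} : RowStochastic (1 : Matrix (Fin n) (Fin n) ℝ) := by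
  constructor
  · intro i j
    by_cases h : i = j <;> simp [Matrix.one_apply, h]
  · intro i
    simp [Matrix.one_apply]

lemma rs_mul {n : ℕ} {A B : Matrix (Fin n) (Fin n) ℝ}
    (hA : RowStochastic A) (hB : RowStochastic B) : RowStochastic (A * B) := by
  constructor
  · intro i j
    rw [Matrix.mul_apply]
    exact Finset.sum_nonneg fun l _ => mul_nonneg (hA.1 i l) (hB.1 l j)
  · intro i
    simp only [Matrix.mul_apply]
    rw [Finset.sum_comm]
    simp [← Finset.mul_sum, hB.2, hA.2]

lemma leftProd_stoch {n : ℕ} (W : ℕ → Matrix (Fin n) (Fin n) ℝ)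
    (hstoch : ∀ k, RowStochastic (W k)) (s : ℕ) :
    ∀ t, RowStochastic (leftProd W s t)
  | 0 => rs_one
  | t + 1 => rs_mul (hstoch _) (leftProd_stoch W hstoch s t)

lemma leftProd_add {n : ℕ} (W : ℕ → Matrix (Fin n) (Fin n) ℝ) (s t : ℕ) :
    ∀ u, leftProd W s (t + u) = leftProd W (s + t) u * leftProd W s t := by
  intro u
  induction u with
  | zero => simp [leftProd]
  | succ u ih =>
    show leftProd W s ((t + u) + 1) = _
    rw [leftProd, ih]
    show _ = (W (s + t + u) * leftProd W (s + t) u) * leftProd W s t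
    rw [mul_assoc, add_assoc]

lemma mul_entry_le {n : ℕ} {A B : Matrix (Fin n) (Fin n) ℝ} (hA : RowStochastic A)
    {μ : ℝ} (hμ0 : 0 ≤ μ) {q : Fin n} (hq : ∀ i, μ ≤ A i q) {j : Fin n} {Mx : ℝ}
    (hMx : ∀ l, B l j ≤ Mx) (i : Fin n) :
    (A * B) i j ≤ μ * B q j + (1 - μ) * Mx := by
  rw [Matrix.mul_apply]
  have h1 : ∑ l, ((if l = q then μ else 0) * B l j) = μ * B q j := by simp
  have expand : (∑ l, A i l * B l j)
      = μ * B q j + ∑ l, (A i l - (if l = q then μ else 0)) * B l j := by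
    simp only [sub_mul, Finset.sum_sub_distrib, h1]
    ring
  rw [expand]
  have hco : ∀ l : Fin n, 0 ≤ A i l - (if l = q then μ else 0) := by
    intro l
    by_cases h : l = q
    · subst h; simpa [sub_nonneg] using hq i
    · simp [h, hA.1 i l]
  have hb : ∑ l, (A i l - (if l = q then μ else 0)) * B l j
      ≤ ∑ l, (A i l - (if l = q then μ else 0)) * Mx :=
    Finset.sum_le_sum fun l _ => mul_le_mul_of_nonneg_left (hMx l) (hco l)
  have hs : ∑ l, (A i l - (if l = q then μ else 0)) * Mx = (1 - μ) * Mx := by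
    rw [← Finset.sum_mul]
    congr 1
    rw [Finset.sum_sub_distrib, hA.2 i]
    simp
  linarith [hb, hs.le]

lemma mul_entry_ge {n : ℕ} {A B : Matrix (Fin n) (Fin n) ℝ} (hA : RowStochastic A)
    {μ : ℝ} (hμ0 : 0 ≤ μ) {q : Fin n} (hq : ∀ i, μ ≤ A i q) {j : Fin n} {mn : ℝ}
    (hmn : ∀ l, mn ≤ B l j) (i : Fin n) :
    μ * B q j + (1 - μ) * mn ≤ (A * B) i j := by
  rw [Matrix.mul_apply]
  have h1 : ∑ l, ((if l = q then μ else 0) * B l j) = μ * B q j := by simp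
  have expand : (∑ l, A i l * B l j)
      = μ * B q j + ∑ l, (A i l - (if l = q then μ else 0)) * B l j := by
    simp only [sub_mul, Finset.sum_sub_distrib, h1]
    ring
  rw [expand]
  have hco : ∀ l : Fin n, 0 ≤ A i l - (if l = q then μ else 0) := by
    intro l
    by_cases h : l = q
    · subst h; simpa [sub_nonneg] using hq i
    · simp [h, hA.1 i l]
  have hb : ∑ l, (A i l - (if l = q then μ else 0)) * mn
      ≤ ∑ l, (A i l - (if l = q then μ else 0)) * B l j :=
    Finset.sum_le_sum fun l _ => mul_le_mul_of_nonneg_left (hmn l) (hco l)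
  have hs : ∑ l, (A i l - (if l = q then μ else 0)) * mn = (1 - μ) * mn := by
    rw [← Finset.sum_mul]
    congr 1
    rw [Finset.sum_sub_distrib, hA.2 i]
    simp
  linarith [hb, hs.le]

/-- if the block products `W_{m_{h+1}-1} ⋯ W_{m_h}` each have a column
bounded below by μ > 0, with block lengths bounded by N, then the transition matrices
`Γ(k) = W_k ⋯ W_0` converge entrywise: all rows tend to a common probability vector ρ. -/
theorem stmt17 (n : ℕ) (hn : 0 < n) (W : ℕ → Matrix (Fin n) (Fin n) ℝ)
    (hstoch : ∀ k, RowStochastic (W k))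
    (μ : ℝ) (hμ0 : 0 < μ) (hμ1 : μ ≤ 1)
    (N : ℕ) (hN : 0 < N)
    (m : ℕ → ℕ) (hm0 : m 0 = 0)
    (hmono : ∀ h, m h < m (h + 1)) (hlen : ∀ h, m (h + 1) - m h ≤ N)
    (hcol : ∀ h, ∃ q : Fin n, ∀ i, μ ≤ leftProd W (m h) (m (h + 1) - m h) i q) :
    ∃ ρ : Fin n → ℝ, (∀ j, 0 ≤ ρ j) ∧ (∑ j, ρ j = 1) ∧
      ∀ i j, Filter.Tendsto (fun k => leftProd W 0 (k + 1) i j)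
        Filter.atTop (nhds (ρ j)) := by
  have hne : (Finset.univ : Finset (Fin n)).Nonempty := ⟨⟨0, hn⟩, Finset.mem_univ _⟩
  set G : ℕ → Matrix (Fin n) (Fin n) ℝ := fun t => leftProd W 0 t with hG
  have hGst : ∀ t, RowStochastic (G t) := leftProd_stoch W hstoch 0
  set M : ℕ → Fin n → ℝ := fun t j => Finset.univ.sup' hne (fun i => G t i j) with hM
  set I : ℕ → Fin n → ℝ := fun t j => Finset.univ.inf' hne (fun i => G t i j) with hI
  have hMx : ∀ t j i, G t i j ≤ M t j := fun t j i =>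
    Finset.le_sup' (fun i => G t i j) (Finset.mem_univ i)
  have hmn : ∀ t j i, I t j ≤ G t i j := fun t j i =>
    Finset.inf'_le (fun i => G t i j) (Finset.mem_univ i)
  have hIM : ∀ t j, I t j ≤ M t j := fun t j => (hmn t j ⟨0, hn⟩).trans (hMx t j ⟨0, hn⟩)
  have hI0 : ∀ t j, 0 ≤ I t j := fun t j =>
    Finset.le_inf' _ _ fun i _ => (hGst t).1 i j
  have hM1 : ∀ t j, M t j ≤ 1 := by
    intro t j
    apply Finset.sup'_le
    intro i _
    calc G t i j ≤ ∑ j', G t i j' :=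
          Finset.single_le_sum (fun j' _ => (hGst t).1 i j') (Finset.mem_univ j)
      _ = 1 := (hGst t).2 i
  -- key step lemma
  have step : ∀ (t u : ℕ) (μ' : ℝ), 0 ≤ μ' → ∀ q : Fin n,
      (∀ i, μ' ≤ leftProd W t u i q) → ∀ j,
      M (t + u) j ≤ μ' * G t q j + (1 - μ') * M t j ∧
      μ' * G t q j + (1 - μ') * I t j ≤ I (t + u) j := by
    intro t u μ' hμ' q hq j
    have hdecomp : G (t + u) = leftProd W t u * G t := by
      have := leftProd_add W 0 t u
      simpa using this
    have hAst : RowStochastic (leftProd W t u) := leftProd_stoch W hstoch t u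
    constructor
    · apply Finset.sup'_le
      intro i _
      rw [hdecomp]
      exact mul_entry_le hAst hμ' hq (fun l => hMx t j l) i
    · apply Finset.le_inf'
      intro i _
      rw [hdecomp]
      exact mul_entry_ge hAst hμ' hq (fun l => hmn t j l) i
  have hManti : ∀ j, Antitone fun t => M t j := by
    intro j
    apply antitone_nat_of_succ_le
    intro t
    have := (step t 1 0 le_rfl ⟨0, hn⟩ (fun i => (leftProd_stoch W hstoch t 1).1 i _) j).1
    linarith
  have hImono : ∀ j, Monotone fun t => I t j := by
    intro j
    apply monotone_nat_of_le_succ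
    intro t
    have := (step t 1 0 le_rfl ⟨0, hn⟩ (fun i => (leftProd_stoch W hstoch t 1).1 i _) j).2
    linarith
  have hcontract : ∀ h j,
      M (m (h + 1)) j - I (m (h + 1)) j ≤ (1 - μ) * (M (m h) j - I (m h) j) := by
    intro h j
    obtain ⟨q, hq⟩ := hcol h
    have heq : m h + (m (h + 1) - m h) = m (h + 1) :=
      Nat.add_sub_cancel' (hmono h).le
    have := step (m h) (m (h + 1) - m h) μ hμ0.le q hq j
    rw [heq] at this
    obtain ⟨h1, h2⟩ := this
    linarith
  have hD : ∀ h j, M (m h) j - I (m h) j ≤ (1 - μ) ^ h := by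
    intro h j
    induction h with
    | zero => simp [hm0]; linarith [hM1 0 j, hI0 0 j]
    | succ h ih =>
      calc M (m (h + 1)) j - I (m (h + 1)) j ≤ (1 - μ) * (M (m h) j - I (m h) j) :=
            hcontract h j
        _ ≤ (1 - μ) * (1 - μ) ^ h := by
            apply mul_le_mul_of_nonneg_left ih; linarith
        _ = (1 - μ) ^ (h + 1) := (pow_succ' _ _).symm
  -- limits
  have hbddM : ∀ j, BddBelow (Set.range fun t => M t j) := by
    intro j
    refine ⟨0, ?_⟩
    rintro x ⟨t, rfl⟩
    exact (hI0 t j).trans (hIM t j)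
  have hbddI : ∀ j, BddAbove (Set.range fun t => I t j) := by
    intro j
    refine ⟨1, ?_⟩
    rintro x ⟨t, rfl⟩
    exact (hIM t j).trans (hM1 t j)
  set ρ : Fin n → ℝ := fun j => ⨅ t, M t j with hρ
  set L : Fin n → ℝ := fun j => ⨆ t, I t j with hL
  have hMtend : ∀ j, Filter.Tendsto (fun t => M t j) Filter.atTop (nhds (ρ j)) :=
    fun j => tendsto_atTop_ciInf (hManti j) (hbddM j)
  have hItend : ∀ j, Filter.Tendsto (fun t => I t j) Filter.atTop (nhds (L j)) :=
    fun j => tendsto_atTop_ciSup (hImono j) (hbddI j)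
  have hsm : StrictMono m := strictMono_nat_of_lt_succ hmono
  have hLρ : ∀ j, L j = ρ j := by
    intro j
    have h1 : Filter.Tendsto (fun h => M (m h) j - I (m h) j) Filter.atTop
        (nhds (ρ j - L j)) :=
      ((hMtend j).sub (hItend j)).comp hsm.tendsto_atTop
    have h2 : Filter.Tendsto (fun h => M (m h) j - I (m h) j) Filter.atTop
        (nhds 0) := by
      apply squeeze_zero (fun h => by linarith [hIM (m h) j]) (fun h => hD h j)
      exact tendsto_pow_atTop_nhds_zero_of_lt_one (by linarith) (by linarith)
    have := tendsto_nhds_unique h1 h2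
    linarith
  have htend : ∀ i j, Filter.Tendsto (fun t => G t i j) Filter.atTop (nhds (ρ j)) := by
    intro i j
    apply tendsto_of_tendsto_of_tendsto_of_le_of_le ((hLρ j) ▸ hItend j) (hMtend j)
      (fun t => hmn t j i) (fun t => hMx t j i)
  refine ⟨ρ, ?_, ?_, ?_⟩
  · intro j
    exact le_ciInf fun t => (hI0 t j).trans (hIM t j)
  · have i0 : Fin n := ⟨0, hn⟩
    have h1 : Filter.Tendsto (fun t => ∑ j, G t i0 j) Filter.atTop
        (nhds (∑ j, ρ j)) :=
      tendsto_finset_sum _ fun j _ => htend i0 j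
    have h2 : Filter.Tendsto (fun t => ∑ j, G t i0 j) Filter.atTop (nhds 1) := by
      have : (fun t => ∑ j, G t i0 j) = fun _ => (1 : ℝ) := by
        funext t; exact (hGst t).2 i0
      rw [this]; exact tendsto_const_nhds
    exact (tendsto_nhds_unique h1 h2).symm ▸ rfl
  · intro i j
    exact (htend i j).comp (Filter.tendsto_add_atTop_nat 1)
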